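/- Let λ > 0, G > 0, and for t ≥ 1 set η_t = 1/(λ t). Suppose real numbers a_1, ..., a_T ≥ 0 and b_1, ..., b_T satisfy b_t ≤ (a_t - a_{t+1})/(2η_t) - (λ/2)a_t + (η_t G²)/2 for each t, where a_{T+1} ≥ 0. Then ∑_{t=1}^T b_t ≤ (G²/(2λ))(1 + ln T). -/

import Mathlib

/-!
With `η_t = 1 / (λ t)`, the coefficient of `a_t` in the `t`-th bound is
`1 / (2 η_t) - λ / 2 = λ (t - 1) / 2 = 1 / (2 η_{t-1})`, so the non-harmonic part of the bound
is `Ψ_t - Ψ_{t+1}` for the potential `Ψ_t = λ (t - 1) / 2 * a_t`. Summing, it telescopes to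
`Ψ_1 - Ψ_{T+1} = -λ T / 2 * a_{T+1} ≤ 0`, and what remains is `G² / (2 λ)` times a harmonic sum.
-/

open Finset

theorem Finset.sum_Icc_one_sub_succ {M : Type*} [AddCommGroup M] (f : ℕ → M) (T : ℕ) :
    ∑ t ∈ Icc 1 T, (f t - f (t + 1)) = f 1 - f (T + 1) := by
  rw [← Ico_add_one_right_eq_Icc, ← neg_sub, ← sum_Ico_sub f (by omega : 1 ≤ T + 1),
    ← sum_neg_distrib]
  simp only [neg_sub]

theorem sum_Icc_inv_le_one_add_log (T : ℕ) :
    ∑ t ∈ Icc 1 T, (t : ℝ)⁻¹ ≤ 1 + Real.log T := by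
  simpa [harmonic_eq_sum_Icc] using harmonic_le_one_add_log T

noncomputable def regretPotential (lam : ℝ) (a : ℕ → ℝ) (t : ℕ) : ℝ := lam * ((t : ℝ) - 1) / 2 * a t

theorem regretPotential_one (lam : ℝ) (a : ℕ → ℝ) : regretPotential lam a 1 = 0 := by
  simp [regretPotential]

theorem regretPotential_succ (lam : ℝ) (a : ℕ → ℝ) (t : ℕ) :
    regretPotential lam a (t + 1) = lam * t / 2 * a (t + 1) := by
  simp [regretPotential]

theorem regretPotential_succ_nonneg {lam : ℝ} (hlam : 0 ≤ lam) {a : ℕ → ℝ} {t : ℕ}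
    (ha : 0 ≤ a (t + 1)) : 0 ≤ regretPotential lam a (t + 1) := by
  rw [regretPotential_succ]
  positivity

theorem step_bound_eq_potential_sub {lam : ℝ} (hlam : lam ≠ 0) (G : ℝ) (a : ℕ → ℝ) {t : ℕ}
    (ht : t ≠ 0) :
    (a t - a (t + 1)) / (2 * (1 / (lam * t))) - lam / 2 * a t + (1 / (lam * t)) * G ^ 2 / 2
      = regretPotential lam a t - regretPotential lam a (t + 1) + G ^ 2 / (2 * lam) * (t : ℝ)⁻¹ := by
  rw [regretPotential_succ, regretPotential]
  field_simp
  ring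

theorem telescoping_log_regret_general (lam G : ℝ) (hlam : 0 < lam)
    (T : ℕ) (a b : ℕ → ℝ)
    (haT : 0 ≤ a (T + 1))
    (hb : ∀ t ∈ Finset.Icc 1 T,
      b t ≤ (a t - a (t + 1)) / (2 * (1 / (lam * t))) - lam / 2 * a t
            + (1 / (lam * t)) * G ^ 2 / 2) :
    ∑ t ∈ Finset.Icc 1 T, b t ≤ G ^ 2 / (2 * lam) * (1 + Real.log T) := by
  set Ψ := regretPotential lam a
  set C := G ^ 2 / (2 * lam)
  have step : ∀ t ∈ Icc 1 T, b t ≤ Ψ t - Ψ (t + 1) + C * (t : ℝ)⁻¹ := fun t ht ↦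
    (hb t ht).trans_eq <|
      step_bound_eq_potential_sub hlam.ne' G a (by have := (mem_Icc.mp ht).1; omega)
  calc ∑ t ∈ Icc 1 T, b t
      ≤ ∑ t ∈ Icc 1 T, (Ψ t - Ψ (t + 1) + C * (t : ℝ)⁻¹) := sum_le_sum step
    _ = Ψ 1 - Ψ (T + 1) + C * ∑ t ∈ Icc 1 T, (t : ℝ)⁻¹ := by
      rw [sum_add_distrib, sum_Icc_one_sub_succ, mul_sum]
    _ ≤ 0 + C * (1 + Real.log T) := by
      gcongr
      · simpa [Ψ, regretPotential_one] using regretPotential_succ_nonneg hlam.le haT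
      · exact sum_Icc_inv_le_one_add_log T
    _ = C * (1 + Real.log T) := zero_add _

theorem telescoping_log_regret (lam G : ℝ) (hlam : 0 < lam) (hG : 0 < G)
    (T : ℕ) (hT : 1 ≤ T) (a b : ℕ → ℝ)
    (ha : ∀ t ∈ Finset.Icc 1 T, 0 ≤ a t) (haT : 0 ≤ a (T + 1))
    (hb : ∀ t ∈ Finset.Icc 1 T,
      b t ≤ (a t - a (t + 1)) / (2 * (1 / (lam * t))) - lam / 2 * a t
            + (1 / (lam * t)) * G ^ 2 / 2) :
    ∑ t ∈ Finset.Icc 1 T, b t ≤ G ^ 2 / (2 * lam) * (1 + Real.log T) :=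
  telescoping_log_regret_general lam G hlam T a b haT hb
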